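/- arXiv:math/0507604 — 3 statements merged into one kernel-verified Lean document; each statement's English description precedes it below -/
import Mathlib

section
/- An (n,k,q)-MDS code C is extendable to an (n+1,k,q)-MDS code if and only if there exists a partition {C₁,...,C_q} of C into q parts such that each part C_i, viewed as a set of n-tuples, is an (n,k-1,q)-MDS code. -/
/-- An `(n,k,q)`-MDS code over an alphabet `A` of size `q`: a set of `q^k` words of
length `n` such that no two distinct words agree in as many as `k` coordinates. -/
def IsMDS (q k : ℕ) {n : ℕ} {A : Type*} [DecidableEq A] (C : Finset (Fin n → A)) : Prop :=
  C.card = q ^ k ∧ ∀ w ∈ C, ∀ v ∈ C, w ≠ v →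
    (Finset.univ.filter fun i => w i = v i).card < k

/-!
Sorting the words of an extension by their last letter and deleting that letter splits `C` into
`q` parts, in each of which two distinct words agree in fewer than `k` places. By the Singleton
bound each part has at most `q^k` words, and since there are `q^(k+1)` words in all, every part
has exactly `q^k`. Conversely, appending the letter `a` to the words of the part labelled `a`
extends `C`: two words from the same part now agree in at most `k` places by the MDS property of
the part, and two words from different parts in at most `k` places by that of `C`.
-/

open Finset Function

section

variable {n k : ℕ} {A : Type*} [DecidableEq A]

def agreeCount (w v : Fin n → A) : ℕ := #{i | w i = v i}

def AgreeLT (k : ℕ) (C : Finset (Fin n → A)) : Prop :=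
  ∀ w ∈ C, ∀ v ∈ C, w ≠ v → agreeCount w v < k

lemma isMDS_iff {q : ℕ} {C : Finset (Fin n → A)} :
    IsMDS q k C ↔ #C = q ^ k ∧ AgreeLT k C :=
  Iff.rfl

lemma agreeCount_snoc (w v : Fin n → A) (a b : A) :
    agreeCount (Fin.snoc w a : Fin (n + 1) → A) (Fin.snoc v b) =
      agreeCount w v + if a = b then 1 else 0 := by
  simp only [agreeCount, card_filter, Fin.sum_univ_castSucc, Fin.snoc_castSucc, Fin.snoc_last]

lemma le_agreeCount_of_comp_castLE_eq {w v : Fin n → A} (hk : k ≤ n)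
    (h : w ∘ Fin.castLE hk = v ∘ Fin.castLE hk) : k ≤ agreeCount w v := by
  calc k = #(univ.map (Fin.castLEEmb hk)) := by simp
    _ ≤ agreeCount w v := card_le_card fun i hi => by
        obtain ⟨j, -, rfl⟩ := mem_map.1 hi
        simpa using congrFun h j

theorem AgreeLT.card_le [Fintype A] [Nonempty A] {C : Finset (Fin n → A)} (hC : AgreeLT k C) :
    #C ≤ Fintype.card A ^ k := by
  by_cases hk : k ≤ n
  · have hinj : Set.InjOn (fun w : Fin n → A => w ∘ Fin.castLE hk) C := fun w hw v hv h => by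
      by_contra hne
      exact (le_agreeCount_of_comp_castLE_eq hk h).not_gt (hC w hw v hv hne)
    calc #C = #(C.image fun w => w ∘ Fin.castLE hk) := (card_image_of_injOn hinj).symm
      _ ≤ Fintype.card (Fin k → A) := card_le_univ _
      _ = Fintype.card A ^ k := by simp
  · calc #C ≤ Fintype.card (Fin n → A) := card_le_univ _
      _ = Fintype.card A ^ n := by simp
      _ ≤ Fintype.card A ^ k := Nat.pow_le_pow_right Fintype.card_pos (by omega)

def shorten (C' : Finset (Fin (n + 1) → A)) (a : A) : Finset (Fin n → A) :=
  {w ∈ C' | w (Fin.last n) = a}.image Fin.init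

lemma mem_shorten {C' : Finset (Fin (n + 1) → A)} {a : A} {w : Fin n → A} :
    w ∈ shorten C' a ↔ Fin.snoc w a ∈ C' := by
  constructor
  · intro h
    obtain ⟨w', hw', rfl⟩ := mem_image.1 h
    obtain ⟨hw'C, rfl⟩ := mem_filter.1 hw'
    rwa [Fin.snoc_init_self]
  · intro h
    exact mem_image.2 ⟨_, mem_filter.2 ⟨h, Fin.snoc_last _ _⟩, Fin.init_snoc _ _⟩

theorem AgreeLT.shorten {C' : Finset (Fin (n + 1) → A)} (hC' : AgreeLT (k + 1) C') (a : A) :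
    AgreeLT k (shorten C' a) := fun w hw v hv hne => by
  have hsnoc : (Fin.snoc w a : Fin (n + 1) → A) ≠ Fin.snoc v a := fun h =>
    hne (by simpa using congrArg Fin.init h)
  have := hC' _ (mem_shorten.1 hw) _ (mem_shorten.1 hv) hsnoc
  rw [agreeCount_snoc, if_pos rfl] at this
  omega

lemma card_shorten {C' : Finset (Fin (n + 1) → A)}
    (hinj : Set.InjOn Fin.init (C' : Set (Fin (n + 1) → A))) (a : A) :
    #(shorten C' a) = #{w ∈ C' | w (Fin.last n) = a} :=
  card_image_of_injOn (hinj.mono (coe_subset.2 (filter_subset _ _)))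

lemma disjoint_shorten {C' : Finset (Fin (n + 1) → A)}
    (hinj : Set.InjOn Fin.init (C' : Set (Fin (n + 1) → A))) {a b : A} (hab : a ≠ b) :
    Disjoint (shorten C' a) (shorten C' b) :=
  disjoint_left.2 fun w ha hb => hab <| by
    have := hinj (mem_shorten.1 ha) (mem_shorten.1 hb) (by simp)
    simpa using congrFun this (Fin.last n)

lemma biUnion_shorten {ι : Type*} [Fintype ι] {e : ι → A} (he : Surjective e)
    (C' : Finset (Fin (n + 1) → A)) :
    univ.biUnion (fun i => shorten C' (e i)) = C'.image Fin.init := by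
  ext w
  simp only [mem_biUnion, mem_univ, true_and, mem_shorten, mem_image]
  constructor
  · rintro ⟨i, hi⟩
    exact ⟨_, hi, Fin.init_snoc _ _⟩
  · rintro ⟨w', hw', rfl⟩
    obtain ⟨i, hi⟩ := he (w' (Fin.last n))
    exact ⟨i, by rwa [hi, Fin.snoc_init_self]⟩

theorem isMDS_shorten [Fintype A] {C' : Finset (Fin (n + 1) → A)}
    (hC' : IsMDS (Fintype.card A) (k + 1) C')
    (hinj : Set.InjOn Fin.init (C' : Set (Fin (n + 1) → A))) (a : A) :
    IsMDS (Fintype.card A) k (shorten C' a) := by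
  obtain ⟨hcard, hagree⟩ := isMDS_iff.1 hC'
  have : Nonempty A := ⟨a⟩
  have hsum : ∑ b, #(shorten C' b) = ∑ _b : A, Fintype.card A ^ k := by
    rw [Fintype.sum_congr _ _ (card_shorten hinj), ← card_eq_sum_card_fiberwise
      (fun _ _ => mem_coe.2 (mem_univ _)), hcard]
    simp [pow_succ']
  exact ⟨(sum_eq_sum_iff_of_le fun b _ => (hagree.shorten b).card_le).1 hsum a (mem_univ a),
    hagree.shorten a⟩

section

variable {ι : Type*} [Fintype ι] {e : ι → A}

def extendByParts (e : ι → A) (P : ι → Finset (Fin n → A)) : Finset (Fin (n + 1) → A) :=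
  univ.biUnion fun i => (P i).image fun w => Fin.snoc w (e i)

lemma mem_extendByParts {P : ι → Finset (Fin n → A)} {x : Fin (n + 1) → A} :
    x ∈ extendByParts e P ↔ ∃ i, ∃ w ∈ P i, Fin.snoc w (e i) = x := by
  simp [extendByParts]

lemma card_extendByParts (he : Injective e) (P : ι → Finset (Fin n → A)) :
    #(extendByParts e P) = ∑ i, #(P i) := by
  rw [extendByParts, card_biUnion]
  · exact Fintype.sum_congr _ _ fun i => card_image_of_injective _ fun w v h => by
      simpa using congrArg Fin.init h
  · intro i _ j _ hij
    refine disjoint_left.2 fun x hi hj => hij (he ?_)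
    obtain ⟨w, -, rfl⟩ := mem_image.1 hi
    obtain ⟨v, -, hv⟩ := mem_image.1 hj
    simpa using (congrFun hv (Fin.last n)).symm

lemma image_init_extendByParts (e : ι → A) (P : ι → Finset (Fin n → A)) :
    (extendByParts e P).image Fin.init = univ.biUnion P := by
  ext w
  simp [mem_extendByParts]

theorem AgreeLT.extendByParts (he : Injective e) {P : ι → Finset (Fin n → A)}
    (hC : AgreeLT (k + 1) (univ.biUnion P)) (hP : ∀ i, AgreeLT k (P i))
    (hdisj : Pairwise (Disjoint on P)) : AgreeLT (k + 1) (extendByParts e P) := by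
  intro x hx y hy hxy
  obtain ⟨i, w, hw, rfl⟩ := mem_extendByParts.1 hx
  obtain ⟨j, v, hv, rfl⟩ := mem_extendByParts.1 hy
  rw [agreeCount_snoc]
  by_cases hij : i = j
  · subst hij
    have := hP i w hw v hv fun h => hxy (h ▸ rfl)
    rw [if_pos rfl]
    omega
  · have hwv : w ≠ v := by
      rintro rfl
      exact disjoint_left.1 (hdisj hij) hw hv
    have := hC w (mem_biUnion.2 ⟨i, mem_univ _, hw⟩) v (mem_biUnion.2 ⟨j, mem_univ _, hv⟩)
    simpa [he.ne hij] using this hwv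

end

end

/-- An `(n,k+1,q)`-MDS code is extendable to an `(n+1,k+1,q)`-MDS code (deleting the last
coordinate of the extension recovers the code) if and only if it admits a partition into
`q` parts, each of which is an `(n,k,q)`-MDS code. -/
theorem mds_extendable_iff_partition (n k q : ℕ) (A : Type*) [DecidableEq A] [Fintype A]
    (hA : Fintype.card A = q)
    (C : Finset (Fin n → A)) (hC : IsMDS q (k + 1) C) :
    (∃ C' : Finset (Fin (n + 1) → A), IsMDS q (k + 1) C' ∧
        C'.image (fun w => w ∘ Fin.castSucc) = C) ↔
    (∃ P : Fin q → Finset (Fin n → A),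
        (∀ i, IsMDS q k (P i)) ∧
        (∀ i j, i ≠ j → Disjoint (P i) (P j)) ∧
        (Finset.univ : Finset (Fin q)).biUnion P = C) := by
  subst hA
  obtain ⟨hCcard, hCagree⟩ := isMDS_iff.1 hC
  let e : Fin (Fintype.card A) ≃ A := (Fintype.equivFin A).symm
  constructor
  · rintro ⟨C', hC', himg⟩
    change C'.image Fin.init = C at himg
    have hinj : Set.InjOn Fin.init (C' : Set (Fin (n + 1) → A)) :=
      card_image_iff.1 (by rw [himg, hCcard, hC'.1])
    refine ⟨fun i => shorten C' (e i), fun i => isMDS_shorten hC' hinj _,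
      fun i j hij => disjoint_shorten hinj (e.injective.ne hij), ?_⟩
    rw [biUnion_shorten e.surjective, himg]
  · rintro ⟨P, hP, hdisj, rfl⟩
    refine ⟨extendByParts e P,
      ⟨?_, AgreeLT.extendByParts e.injective hCagree (fun i => (hP i).2) hdisj⟩,
      image_init_extendByParts e P⟩
    simp [card_extendByParts e.injective, (hP _).1, pow_succ']
end

section
/- Let π be a projective plane of order q with a distinguished line ℓ∞, let A ⊆ ℓ∞ with |A| < √q + 1, and let S be a set of q points of π not on ℓ∞ such that the line joining any two distinct points of S meets ℓ∞ in a point of A. Then S is contained in a line of π. -/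
/-!
Suppose `S` is not contained in a line and let `R` be its set of directions on `ℓ∞`. If a line
`ℓ` through a direction `d` misses a point `y ∈ S`, then joining `y` to the points of `S` on `ℓ`
gives pairwise distinct directions, all different from `d`; so `ℓ` carries at most `|R| - 1`
points of `S`. Fixing `p ∈ S`, the other points of `S` are covered by the `|R|` lines joining `p`
to the directions, each of which carries at most `|R| - 2` of them. Hence `|S| ≤ (|R| - 1)²`,
i.e. `S` determines at least `√|S| + 1` directions.
-/

open Configuration

theorem Set.ncard_le_ncard_mul_of_forall_exists {α β : Type*} {s : Set α} {t : Set β} {n : ℕ}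
    (r : α → β → Prop) (hs : ∀ a ∈ s, ∃ b ∈ t, r a b) (hn : ∀ b ∈ t, {a ∈ s | r a b}.ncard ≤ n)
    (hsf : s.Finite := by toFinite_tac) (htf : t.Finite := by toFinite_tac) :
    s.ncard ≤ t.ncard * n := by
  have hcover : s ⊆ ⋃ b ∈ htf.toFinset, {a ∈ s | r a b} := fun a ha => by
    obtain ⟨b, hb, hab⟩ := hs a ha
    exact mem_biUnion (htf.mem_toFinset.2 hb) ⟨ha, hab⟩
  calc s.ncard ≤ (⋃ b ∈ htf.toFinset, {a ∈ s | r a b}).ncard :=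
        ncard_le_ncard hcover (hsf.subset (iUnion₂_subset fun _ _ => sep_subset _ _))
    _ ≤ ∑ b ∈ htf.toFinset, {a ∈ s | r a b}.ncard := Finset.set_ncard_biUnion_le _ _
    _ ≤ htf.toFinset.card • n :=
        Finset.sum_le_card_nsmul _ _ _ fun b hb => hn b (htf.mem_toFinset.1 hb)
    _ = t.ncard * n := by rw [ncard_eq_toFinset_card t htf, smul_eq_mul]

namespace Configuration

variable {P L : Type*} [Membership P L]

theorem Nondegenerate.line_unique [Nondegenerate P L] {p x : P} {l m : L} (h : p ≠ x)
    (hpl : p ∈ l) (hxl : x ∈ l) (hpm : p ∈ m) (hxm : x ∈ m) : l = m :=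
  (eq_or_eq hpl hxl hpm hxm).resolve_left h

theorem Nondegenerate.point_unique [Nondegenerate P L] {p x : P} {l m : L} (h : l ≠ m)
    (hpl : p ∈ l) (hpm : p ∈ m) (hxl : x ∈ l) (hxm : x ∈ m) : p = x :=
  (eq_or_eq hpl hxl hpm hxm).resolve_right h

theorem ProjectivePlane.exists_mem_line [ProjectivePlane P L] (p : P) : ∃ l : L, p ∈ l := by
  obtain ⟨p₁, p₂, -, -, l₂, -, h₁₂, -, -, h₂₂, -⟩ := exists_config (P := P) (L := L)
  by_cases h : p = p₁
  · subst h
    exact ⟨_, (HasLines.mkLine_ax (ne_of_mem_of_not_mem h₂₂ h₁₂).symm).1⟩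
  · exact ⟨_, (HasLines.mkLine_ax h).1⟩

def redeiSet (linf : L) (S : Set P) : Set P :=
  {d | d ∈ linf ∧ ∃ p ∈ S, ∃ x ∈ S, p ≠ x ∧ ∃ m : L, p ∈ m ∧ x ∈ m ∧ d ∈ m}

variable [ProjectivePlane P L] {linf : L} {S : Set P}

open Nondegenerate

theorem exists_mem_redeiSet (hS : ∀ p ∈ S, p ∉ linf) {p x : P} (hp : p ∈ S) (hx : x ∈ S)
    (hpx : p ≠ x) : ∃ d ∈ redeiSet linf S, ∃ m : L, p ∈ m ∧ x ∈ m ∧ d ∈ m := by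
  obtain ⟨hpm, hxm⟩ := HasLines.mkLine_ax (L := L) hpx
  have hm : HasLines.mkLine hpx ≠ linf := fun h => hS p hp (h ▸ hpm)
  obtain ⟨hdm, hdl⟩ := HasPoints.mkPoint_ax (P := P) hm
  exact ⟨_, ⟨hdl, p, hp, x, hx, hpx, _, hpm, hxm, hdm⟩, _, hpm, hxm, hdm⟩

theorem ncard_inter_add_one_le_ncard_redeiSet [Finite P] (hS : ∀ p ∈ S, p ∉ linf) {y d : P}
    {l : L} (hy : y ∈ S) (hyl : y ∉ l) (hd : d ∈ redeiSet linf S) (hdl : d ∈ l) :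
    {x ∈ S | x ∈ l}.ncard + 1 ≤ (redeiSet linf S).ncard := by
  rw [← Set.ncard_sdiff_singleton_add_one hd, ← mul_one (redeiSet linf S \ {d}).ncard]
  gcongr
  refine Set.ncard_le_ncard_mul_of_forall_exists
    (fun x e => ∃ m : L, y ∈ m ∧ x ∈ m ∧ e ∈ m) ?cover ?fiber
  case cover =>
    rintro x ⟨hxS, hxl⟩
    have hyx : y ≠ x := (ne_of_mem_of_not_mem hxl hyl).symm
    obtain ⟨e, he, m, hym, hxm, hem⟩ := exists_mem_redeiSet hS hy hxS hyx
    refine ⟨e, ⟨he, ?_⟩, m, hym, hxm, hem⟩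
    rintro rfl
    have hxe : x ≠ e := (ne_of_mem_of_not_mem hd.1 (hS x hxS)).symm
    exact hyl (line_unique hxe hxm hem hxl hdl ▸ hym)
  case fiber =>
    rintro e ⟨he, -⟩
    refine (Set.ncard_le_one_iff).2 ?_
    rintro x x' ⟨⟨-, hxl⟩, m, hym, hxm, hem⟩ ⟨⟨-, hx'l⟩, m', hym', hx'm', hem'⟩
    have hye : y ≠ e := (ne_of_mem_of_not_mem he.1 (hS y hy)).symm
    obtain rfl := line_unique hye hym hem hym' hem'
    exact point_unique (fun h : m = l => hyl (h ▸ hym)) hxm hxl hx'm' hx'l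

theorem ncard_sub_one_le_mul_ncard_redeiSet [Finite P] (hS : ∀ p ∈ S, p ∉ linf)
    (hncol : ∀ m : L, ∃ x ∈ S, x ∉ m) {p : P} (hp : p ∈ S) :
    S.ncard - 1 ≤ (redeiSet linf S).ncard * ((redeiSet linf S).ncard - 2) := by
  rw [← Set.ncard_sdiff_singleton_of_mem hp]
  refine Set.ncard_le_ncard_mul_of_forall_exists
    (fun x d => ∃ m : L, p ∈ m ∧ x ∈ m ∧ d ∈ m) ?_ fun d hd => ?_
  · rintro x ⟨hxS, hxp⟩
    exact exists_mem_redeiSet hS hp hxS (Ne.symm hxp)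
  have hpd : p ≠ d := (ne_of_mem_of_not_mem hd.1 (hS p hp)).symm
  obtain ⟨l, hpl, hdl⟩ : ∃ l : L, p ∈ l ∧ d ∈ l := ⟨_, HasLines.mkLine_ax hpd⟩
  obtain ⟨y, hy, hyl⟩ := hncol l
  have hfiber : {x ∈ S \ {p} | ∃ m : L, p ∈ m ∧ x ∈ m ∧ d ∈ m} ⊆ {x ∈ S | x ∈ l} \ {p} := by
    rintro x ⟨⟨hxS, hxp⟩, m, hpm, hxm, hdm⟩
    exact ⟨⟨hxS, line_unique hpd hpm hdm hpl hdl ▸ hxm⟩, hxp⟩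
  have hline := ncard_inter_add_one_le_ncard_redeiSet hS hy hyl hd hdl
  calc _ ≤ ({x ∈ S | x ∈ l} \ {p}).ncard := Set.ncard_le_ncard hfiber
    _ = {x ∈ S | x ∈ l}.ncard - 1 := Set.ncard_sdiff_singleton_of_mem ⟨hp, hpl⟩
    _ ≤ _ := by omega

theorem two_le_ncard_redeiSet [Finite P] (hS : ∀ p ∈ S, p ∉ linf)
    (hncol : ∀ m : L, ∃ x ∈ S, x ∉ m) : 2 ≤ (redeiSet linf S).ncard := by
  obtain ⟨p, hp, -⟩ := hncol linf
  obtain ⟨l, hpl⟩ := ProjectivePlane.exists_mem_line (L := L) p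
  obtain ⟨x, hx, hxl⟩ := hncol l
  obtain ⟨d, hd, m, hpm, -, hdm⟩ := exists_mem_redeiSet hS hp hx (ne_of_mem_of_not_mem hpl hxl)
  obtain ⟨y, hy, hym⟩ := hncol m
  have hpos : 0 < {x ∈ S | x ∈ m}.ncard := (Set.ncard_pos).2 ⟨p, hp, hpm⟩
  have hline := ncard_inter_add_one_le_ncard_redeiSet hS hy hym hd hdm
  omega

theorem sqrt_ncard_add_one_le_ncard_redeiSet [Finite P] (hS : ∀ p ∈ S, p ∉ linf)
    (hncol : ∀ m : L, ∃ x ∈ S, x ∉ m) : √(S.ncard : ℝ) + 1 ≤ (redeiSet linf S).ncard := by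
  obtain ⟨k, hk⟩ := Nat.exists_eq_add_of_le' (two_le_ncard_redeiSet hS hncol)
  obtain ⟨p, hp, -⟩ := hncol linf
  have hcount := ncard_sub_one_le_mul_ncard_redeiSet hS hncol hp
  rw [hk, Nat.add_sub_cancel] at hcount
  have hsq : S.ncard ≤ (k + 1) ^ 2 :=
    calc S.ncard ≤ (k + 2) * k + 1 := by omega
      _ = (k + 1) ^ 2 := by ring
  have hsqrt : √(S.ncard : ℝ) ≤ k + 1 := Real.sqrt_le_iff.2 ⟨by positivity, by exact_mod_cast hsq⟩
  rw [hk]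
  push_cast
  linarith

end Configuration

theorem redei_set_small_implies_collinear_general
    (P L : Type*) [Membership P L] [ProjectivePlane P L] [Fintype P]
    (q : ℕ)
    (linf : L) (A : Set P)
    (hAcard : (A.ncard : ℝ) < Real.sqrt q + 1)
    (S : Set P) (hScard : S.ncard = q) (hSoff : ∀ p ∈ S, p ∉ linf)
    (hdir : ∀ p ∈ S, ∀ p' ∈ S, p ≠ p' → ∀ m : L, p ∈ m → p' ∈ m →
        ∀ x : P, x ∈ m → x ∈ linf → x ∈ A) :
    ∃ m : L, ∀ p ∈ S, p ∈ m := by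
  by_contra! hS
  have hRA : redeiSet linf S ⊆ A := by
    rintro d ⟨hdl, p, hp, p', hp', hpp', m, hpm, hp'm, hdm⟩
    exact hdir p hp p' hp' hpp' m hpm hp'm d hdm hdl
  have hdirections := sqrt_ncard_add_one_le_ncard_redeiSet hSoff hS
  have hRcard : ((redeiSet linf S).ncard : ℝ) ≤ A.ncard := by exact_mod_cast Set.ncard_le_ncard hRA
  rw [hScard] at hdirections
  linarith

/-- In a projective plane of order `q` with a distinguished line `ℓ∞`, if `A ⊆ ℓ∞` has
`|A| < √q + 1` and `S` is a set of `q` affine points all of whose pairwise joining lines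
meet `ℓ∞` within `A`, then `S` is contained in a line. -/
theorem redei_set_small_implies_collinear
    (P L : Type*) [Membership P L] [ProjectivePlane P L] [Fintype P] [Fintype L]
    (q : ℕ) (hq : ProjectivePlane.order P L = q)
    (linf : L) (A : Set P) (hA : ∀ p ∈ A, p ∈ linf)
    (hAcard : (A.ncard : ℝ) < Real.sqrt q + 1)
    (S : Set P) (hScard : S.ncard = q) (hSoff : ∀ p ∈ S, p ∉ linf)
    (hdir : ∀ p ∈ S, ∀ p' ∈ S, p ≠ p' → ∀ m : L, p ∈ m → p' ∈ m →
        ∀ x : P, x ∈ m → x ∈ linf → x ∈ A) :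
    ∃ m : L, ∀ p ∈ S, p ∈ m :=
  redei_set_small_implies_collinear_general P L q linf A hAcard S hScard hSoff hdir
end

section
/- Let p ≡ 3 (mod 4) be a prime. Then there exists a maximal ((p+5)/2, 3, p)-MDS code, i.e., a (not necessarily linear) ((p+5)/2, 3, p)-MDS code admitting no extension to an ((p+5)/2 + 1, 3, p)-MDS code. -/
open Finset
set_option linter.unusedSectionVars false
set_option linter.unusedVariables false
set_option maxHeartbeats 1000000

namespace MDSAux
variable {p : ℕ} [Fact p.Prime]

def v3 (a b c : ZMod p) : Fin 3 → ZMod p := fun i => if i = 0 then a else if i = 1 then b else c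
@[simp] lemma v3_0 (a b c : ZMod p) : v3 a b c 0 = a := rfl
@[simp] lemma v3_1 (a b c : ZMod p) : v3 a b c 1 = b := rfl
@[simp] lemma v3_2 (a b c : ZMod p) : v3 a b c 2 = c := rfl

def dot (x y : Fin 3 → ZMod p) : ZMod p := x 0 * y 0 + x 1 * y 1 + x 2 * y 2
lemma dot_comm (x y : Fin 3 → ZMod p) : dot x y = dot y x := by unfold dot; ring
lemma vec_eq_zero {z : Fin 3 → ZMod p} (h0 : z 0 = 0) (h1 : z 1 = 0) (h2 : z 2 = 0) :
    z = 0 := by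
  funext i; fin_cases i <;> simpa

def Sq : Finset (ZMod p) := univ.image (fun y => y*y)
lemma mem_Sq {x : ZMod p} : x ∈ (Sq : Finset (ZMod p)) ↔ ∃ y, y * y = x := by
  simp [Sq, eq_comm]
lemma zero_mem_Sq : (0 : ZMod p) ∈ (Sq : Finset (ZMod p)) := mem_Sq.mpr ⟨0, by ring⟩
lemma nonsq_ne_zero {a : ZMod p} (ha : a ∉ (Sq : Finset (ZMod p))) : a ≠ 0 := by
  rintro rfl; exact ha zero_mem_Sq

lemma hp3 (hmod : p % 4 = 3) : 3 ≤ p := by omega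

lemma two_ne_zero' (hmod : p % 4 = 3) : (2 : ZMod p) ≠ 0 := by
  have h : ((2:ℕ) : ZMod p) ≠ 0 := by
    rw [Ne, ZMod.natCast_eq_zero_iff]
    intro h
    have := Nat.le_of_dvd (by norm_num) h
    omega
  simpa using h

lemma card_Sq (hmod : p % 4 = 3) : (Sq : Finset (ZMod p)).card = (p+1)/2 := by
  have hcard : Fintype.card (ZMod p) = p := ZMod.card p
  have hfib : (univ : Finset (ZMod p)).card
      = ∑ s ∈ (Sq : Finset (ZMod p)), ((univ : Finset (ZMod p)).filter fun y => y*y = s).card :=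
    Finset.card_eq_sum_card_fiberwise (fun y _ => mem_Sq.mpr ⟨y, rfl⟩)
  have hzero : ((univ : Finset (ZMod p)).filter fun y => y*y = (0:ZMod p)).card = 1 := by
    rw [show ((univ : Finset (ZMod p)).filter fun y => y*y = (0:ZMod p)) = {0} from ?_]
    · simp
    · ext y; simp [mul_self_eq_zero]
  have hfib2 : ∀ s ∈ (Sq : Finset (ZMod p)).erase 0,
      ((univ : Finset (ZMod p)).filter fun y => y*y = s).card = 2 := by
    intro s hs
    rw [mem_erase] at hs
    obtain ⟨hs0, hsSq⟩ := hs
    obtain ⟨y, hy⟩ := mem_Sq.mp hsSq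
    have hy0 : y ≠ 0 := by rintro rfl; simp at hy; exact hs0 hy.symm
    have : ((univ : Finset (ZMod p)).filter fun z => z*z = s) = {y, -y} := by
      ext z
      simp only [mem_filter, mem_univ, true_and, mem_insert, mem_singleton]
      constructor
      · intro hz
        have : (z - y) * (z + y) = 0 := by rw [← hy] at hz; ring_nf; linear_combination hz
        rcases mul_eq_zero.mp this with h | h
        · left; exact sub_eq_zero.mp h
        · right; linear_combination h
      · rintro (rfl | rfl)
        · exact hy
        · rw [← hy]; ring
    rw [this]
    rw [card_insert_of_notMem, card_singleton]
    simp only [mem_singleton]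
    intro h
    have : (2:ZMod p) * y = 0 := by linear_combination h
    rcases mul_eq_zero.mp this with h2 | h2
    · exact two_ne_zero' hmod h2
    · exact hy0 h2
  have hsplit : (Sq : Finset (ZMod p)) = insert 0 ((Sq : Finset (ZMod p)).erase 0) :=
    (Finset.insert_erase zero_mem_Sq).symm
  rw [hsplit] at hfib
  rw [Finset.sum_insert (notMem_erase _ _)] at hfib
  rw [hzero, Finset.sum_congr rfl hfib2, Finset.sum_const, smul_eq_mul] at hfib
  have hcu : (univ : Finset (ZMod p)).card = p := by rw [Finset.card_univ, hcard]
  have hce : ((Sq : Finset (ZMod p)).erase 0).card = (Sq : Finset (ZMod p)).card - 1 :=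
    Finset.card_erase_of_mem zero_mem_Sq
  have hpos : 1 ≤ (Sq : Finset (ZMod p)).card := Finset.card_pos.mpr ⟨0, zero_mem_Sq⟩
  omega

lemma nonsq_mul (hmod : p % 4 = 3) {a b : ZMod p}
    (ha : a ∉ (Sq : Finset (ZMod p))) (hb : b ∉ (Sq : Finset (ZMod p))) :
    a * b ∈ (Sq : Finset (ZMod p)) := by
  have ha0 : a ≠ 0 := nonsq_ne_zero ha
  have hb0 : b ≠ 0 := nonsq_ne_zero hb
  set NS : Finset (ZMod p) := univ.filter (fun x => x ∉ (Sq : Finset (ZMod p))) with hNS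
  have hcardNS : NS.card = (p-1)/2 := by
    have : NS = univ \ (Sq : Finset (ZMod p)) := by
      ext x; simp [hNS]
    rw [this, Finset.card_sdiff_of_subset (subset_univ _), Finset.card_univ, ZMod.card, card_Sq hmod]
    have := (Fact.out : p.Prime).two_le
    omega
  set T : Finset (ZMod p) := ((Sq : Finset (ZMod p)).erase 0).image (fun s => a * s) with hT
  have hcardT : T.card = (p-1)/2 := by
    rw [hT, Finset.card_image_of_injective _ (mul_right_injective₀ ha0),
      Finset.card_erase_of_mem zero_mem_Sq, card_Sq hmod]
    have := (Fact.out : p.Prime).two_le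
    omega
  have hTNS : T ⊆ NS := by
    intro x hx
    rw [hT, Finset.mem_image] at hx
    obtain ⟨s, hs, rfl⟩ := hx
    rw [Finset.mem_erase] at hs
    obtain ⟨hs0, hsSq⟩ := hs
    obtain ⟨w, hw⟩ := mem_Sq.mp hsSq
    have hw0 : w ≠ 0 := by rintro rfl; exact hs0 (by rw [← hw]; ring)
    rw [hNS, Finset.mem_filter]
    refine ⟨mem_univ _, fun hcon => ?_⟩
    obtain ⟨r, hr⟩ := mem_Sq.mp hcon
    apply ha
    apply mem_Sq.mpr ⟨r * w⁻¹, ?_⟩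
    field_simp
    rw [← hw] at hr
    linear_combination hr
  have hTeq : T = NS := Finset.eq_of_subset_of_card_le hTNS (by omega)
  have hbT : b ∈ T := by
    rw [hTeq, hNS, Finset.mem_filter]; exact ⟨mem_univ _, hb⟩
  rw [hT, Finset.mem_image] at hbT
  obtain ⟨s, hs, hbs⟩ := hbT
  rw [Finset.mem_erase] at hs
  obtain ⟨w, hw⟩ := mem_Sq.mp hs.2
  apply mem_Sq.mpr ⟨a * w, ?_⟩
  rw [← hbs, ← hw]; ring

lemma neg_one_not_Sq (hmod : p % 4 = 3) : (-1 : ZMod p) ∉ (Sq : Finset (ZMod p)) := by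
  intro h
  obtain ⟨y, hy⟩ := mem_Sq.mp h
  exact absurd (ZMod.exists_sq_eq_neg_one_iff.mp ⟨y, hy.symm⟩) (by omega)

lemma sq_or_neg_sq (hmod : p % 4 = 3) (x : ZMod p) :
    x ∈ (Sq : Finset (ZMod p)) ∨ -x ∈ (Sq : Finset (ZMod p)) := by
  by_contra hcon
  push_neg at hcon
  obtain ⟨h1, h2⟩ := hcon
  have hx0 : x ≠ 0 := nonsq_ne_zero h1
  have := nonsq_mul hmod h1 h2
  obtain ⟨w, hw⟩ := mem_Sq.mp this
  apply neg_one_not_Sq hmod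
  apply mem_Sq.mpr ⟨w * x⁻¹, ?_⟩
  field_simp
  linear_combination hw

lemma inv_not_Sq (hmod : p % 4 = 3) {a : ZMod p} (ha : a ∉ (Sq : Finset (ZMod p))) :
    a⁻¹ ∉ (Sq : Finset (ZMod p)) := by
  have ha0 : a ≠ 0 := nonsq_ne_zero ha
  intro h
  obtain ⟨w, hw⟩ := mem_Sq.mp h
  apply ha
  apply mem_Sq.mpr ⟨w⁻¹, ?_⟩
  have h2 : (w*w)⁻¹ = (a⁻¹)⁻¹ := by rw [hw]
  rw [mul_inv_rev, inv_inv] at h2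
  rw [← h2]

lemma sumsq_ne_zero (hmod : p % 4 = 3) {s t : ZMod p}
    (hs : s ∈ (Sq : Finset (ZMod p))) (ht : t ∈ (Sq : Finset (ZMod p))) (hne : s ≠ t) :
    s + t ≠ 0 := by
  intro h
  obtain ⟨y, hy⟩ := mem_Sq.mp hs
  obtain ⟨w, hw⟩ := mem_Sq.mp ht
  have hy0 : y ≠ 0 := by
    rintro rfl
    apply hne
    have hs0 : s = 0 := by rw [← hy]; ring
    rw [hs0] at h ⊢
    simpa using h.symm
  apply neg_one_not_Sq hmod
  apply mem_Sq.mpr ⟨w * y⁻¹, ?_⟩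
  field_simp
  have : t = -(y*y) := by rw [hy]; linear_combination h
  rw [← hw] at this
  linear_combination this






def cf (t : ZMod p) : Fin 3 → ZMod p := v3 1 t (t*t)
def pe2 : Fin 3 → ZMod p := v3 0 1 0
def pe3 : Fin 3 → ZMod p := v3 0 0 1

lemma cf_inj {s t : ZMod p} (h : cf s = cf t) : s = t := by
  have := congrFun h 1; simpa [cf] using this
lemma cf_ne_pe2 {t : ZMod p} : cf t ≠ (pe2 : Fin 3 → ZMod p) := by
  intro h; have := congrFun h 0; simp [cf, pe2] at this
lemma cf_ne_pe3 {t : ZMod p} : cf t ≠ (pe3 : Fin 3 → ZMod p) := by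
  intro h; have := congrFun h 0; simp [cf, pe3] at this
lemma pe2_ne_pe3 : (pe2 : Fin 3 → ZMod p) ≠ pe3 := by
  intro h; have := congrFun h 1; simp [pe2, pe3] at this

def K : Finset (Fin 3 → ZMod p) := Sq.image cf ∪ {pe2, pe3}

lemma mem_K {x : Fin 3 → ZMod p} :
    x ∈ (K : Finset (Fin 3 → ZMod p)) ↔
      (∃ t ∈ (Sq : Finset (ZMod p)), cf t = x) ∨ x = pe2 ∨ x = pe3 := by
  simp only [K, mem_union, mem_image, mem_insert, mem_singleton]

lemma pe2_mem_K : (pe2 : Fin 3 → ZMod p) ∈ (K : Finset (Fin 3 → ZMod p)) :=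
  mem_K.mpr (Or.inr (Or.inl rfl))
lemma pe3_mem_K : (pe3 : Fin 3 → ZMod p) ∈ (K : Finset (Fin 3 → ZMod p)) :=
  mem_K.mpr (Or.inr (Or.inr rfl))
lemma cf_mem_K {t : ZMod p} (ht : t ∈ (Sq : Finset (ZMod p))) :
    cf t ∈ (K : Finset (Fin 3 → ZMod p)) := mem_K.mpr (Or.inl ⟨t, ht, rfl⟩)

def det3 (a b c : Fin 3 → ZMod p) : ZMod p :=
  a 0*(b 1*c 2 - b 2*c 1) - a 1*(b 0*c 2 - b 2*c 0) + a 2*(b 0*c 1 - b 1*c 0)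

def Reg (a b c : Fin 3 → ZMod p) : Prop :=
  ∀ z, dot z a = 0 → dot z b = 0 → dot z c = 0 → z = 0

lemma reg_swap12 {a b c : Fin 3 → ZMod p} (h : Reg a b c) : Reg b a c :=
  fun z h1 h2 h3 => h z h2 h1 h3
lemma reg_swap23 {a b c : Fin 3 → ZMod p} (h : Reg a b c) : Reg a c b :=
  fun z h1 h2 h3 => h z h1 h3 h2
lemma reg_rot {a b c : Fin 3 → ZMod p} (h : Reg a b c) : Reg b c a :=
  fun z h1 h2 h3 => h z h3 h1 h2

lemma reg_of_det {a b c : Fin 3 → ZMod p} (h : det3 a b c ≠ 0) : Reg a b c := by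
  intro z h1 h2 h3
  have e0 : z 0 * det3 a b c =
      dot z a * (b 1*c 2 - b 2*c 1) - dot z b * (a 1*c 2 - a 2*c 1)
        + dot z c * (a 1*b 2 - a 2*b 1) := by unfold dot det3; ring
  have e1 : z 1 * det3 a b c =
      - dot z a * (b 0*c 2 - b 2*c 0) + dot z b * (a 0*c 2 - a 2*c 0)
        - dot z c * (a 0*b 2 - a 2*b 0) := by unfold dot det3; ring
  have e2 : z 2 * det3 a b c =
      dot z a * (b 0*c 1 - b 1*c 0) - dot z b * (a 0*c 1 - a 1*c 0)
        + dot z c * (a 0*b 1 - a 1*b 0) := by unfold dot det3; ring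
  rw [h1, h2, h3] at e0 e1 e2
  simp only [zero_mul, neg_zero, sub_zero, add_zero, zero_add, zero_sub, neg_eq_zero] at e0 e1 e2
  exact vec_eq_zero ((mul_eq_zero.mp e0).resolve_right h)
    ((mul_eq_zero.mp e1).resolve_right h) ((mul_eq_zero.mp e2).resolve_right h)

lemma regCCC {s t r : ZMod p} (hst : s ≠ t) (hsr : s ≠ r) (htr : t ≠ r) :
    Reg (cf s) (cf t) (cf r) := by
  apply reg_of_det
  have : det3 (cf s) (cf t) (cf r) = (t - s)*((r - s)*(r - t)) := by
    simp only [det3, cf, v3_0, v3_1, v3_2]; ring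
  rw [this]
  exact mul_ne_zero (sub_ne_zero.mpr (Ne.symm hst))
    (mul_ne_zero (sub_ne_zero.mpr (Ne.symm hsr)) (sub_ne_zero.mpr (Ne.symm htr)))

lemma regCCe2 (hmod : p % 4 = 3) {s t : ZMod p} (hs : s ∈ (Sq : Finset (ZMod p)))
    (ht : t ∈ (Sq : Finset (ZMod p))) (hst : s ≠ t) : Reg (cf s) (cf t) pe2 := by
  apply reg_of_det
  have : det3 (cf s) (cf t) pe2 = (s - t)*(s + t) := by
    simp only [det3, cf, pe2, v3_0, v3_1, v3_2]; ring
  rw [this]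
  exact mul_ne_zero (sub_ne_zero.mpr hst) (sumsq_ne_zero hmod hs ht hst)

lemma regCCe3 {s t : ZMod p} (hst : s ≠ t) : Reg (cf s) (cf t) pe3 := by
  apply reg_of_det
  have : det3 (cf s) (cf t) pe3 = t - s := by
    simp only [det3, cf, pe3, v3_0, v3_1, v3_2]; ring
  rw [this]
  exact sub_ne_zero.mpr (Ne.symm hst)

lemma regCe2e3 {s : ZMod p} : Reg (cf s) pe2 pe3 := by
  apply reg_of_det
  have : det3 (cf s) pe2 pe3 = 1 := by
    simp only [det3, cf, pe2, pe3, v3_0, v3_1, v3_2]; ring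
  rw [this]; exact one_ne_zero

lemma reg_K (hmod : p % 4 = 3) {a b c : Fin 3 → ZMod p}
    (ha : a ∈ (K : Finset (Fin 3 → ZMod p))) (hb : b ∈ (K : Finset (Fin 3 → ZMod p)))
    (hc : c ∈ (K : Finset (Fin 3 → ZMod p)))
    (hab : a ≠ b) (hac : a ≠ c) (hbc : b ≠ c) : Reg a b c := by
  rcases mem_K.mp ha with ⟨s, hs, rfl⟩ | rfl | rfl <;>
    rcases mem_K.mp hb with ⟨t, ht, rfl⟩ | rfl | rfl <;>
      rcases mem_K.mp hc with ⟨r, hr, rfl⟩ | rfl | rfl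
  · exact regCCC (fun h => hab (by rw [h])) (fun h => hac (by rw [h])) (fun h => hbc (by rw [h]))
  · exact regCCe2 hmod hs ht (fun h => hab (by rw [h]))
  · exact regCCe3 (fun h => hab (by rw [h]))
  · exact reg_swap23 (regCCe2 hmod hs hr (fun h => hac (by rw [h])))
  · exact absurd rfl hbc
  · exact regCe2e3
  · exact reg_swap23 (regCCe3 (fun h => hac (by rw [h])))
  · exact reg_swap23 regCe2e3
  · exact absurd rfl hbc
  · exact reg_rot (reg_rot (regCCe2 hmod ht hr (fun h => hbc (by rw [h]))))
  · exact absurd rfl hac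
  · exact reg_swap12 regCe2e3
  · exact absurd rfl hab
  · exact absurd rfl hab
  · exact absurd rfl hab
  · exact reg_rot (regCe2e3 (s := r))
  · exact absurd rfl hac
  · exact absurd rfl hbc
  · exact reg_rot (reg_rot (regCCe3 (fun h => hbc (by rw [h]))))
  · exact reg_rot (reg_rot (regCe2e3 (s := t)))
  · exact absurd rfl hac
  · exact reg_swap12 (reg_rot (regCe2e3 (s := r)))
  · exact absurd rfl hbc
  · exact absurd rfl hac
  · exact absurd rfl hab
  · exact absurd rfl hab
  · exact absurd rfl hab

lemma v3_ne_zero_of {a b c : ZMod p} (i : Fin 3) (h : v3 a b c i ≠ 0) :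
    v3 a b c ≠ 0 := fun hz => h (by rw [hz]; rfl)

lemma secant_through (hmod : p % 4 = 3) {u : Fin 3 → ZMod p} (hu : u ≠ 0) :
    ∃ z : Fin 3 → ZMod p, z ≠ 0 ∧ dot z u = 0 ∧
      ∃ a b, a ∈ (K : Finset (Fin 3 → ZMod p)) ∧ b ∈ (K : Finset (Fin 3 → ZMod p)) ∧
        a ≠ b ∧ dot z a = 0 ∧ dot z b = 0 := by
  by_cases h0 : u 0 = 0
  · refine ⟨v3 1 0 0, v3_ne_zero_of 0 (by simp), by simp [dot, h0], pe2, pe3,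
      pe2_mem_K, pe3_mem_K, pe2_ne_pe3, by simp [dot, pe2], by simp [dot, pe3]⟩
  · set b' : ZMod p := u 1 * (u 0)⁻¹ with hb'def
    set c' : ZMod p := u 2 * (u 0)⁻¹ with hc'def
    by_cases hb' : b' ∈ (Sq : Finset (ZMod p))
    · refine ⟨v3 b' (-1) 0, v3_ne_zero_of 1 (by simp), ?_, cf b', pe3,
        cf_mem_K hb', pe3_mem_K, cf_ne_pe3, by simp [dot, cf], by simp [dot, pe3]⟩
      simp only [dot, v3_0, v3_1, v3_2, hb'def]
      field_simp
      ring
    · have hu1 : u 1 ≠ 0 := by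
        intro h
        apply nonsq_ne_zero hb'
        rw [hb'def, h, zero_mul]
      by_cases hc0 : u 2 = 0
      · refine ⟨v3 0 0 1, v3_ne_zero_of 2 (by simp), by simp [dot, hc0], cf 0, pe2,
          cf_mem_K zero_mem_Sq, pe2_mem_K, cf_ne_pe2, by simp [dot, cf], by simp [dot, pe2]⟩
      · by_cases hc' : c' ∈ (Sq : Finset (ZMod p))
        · obtain ⟨y, hy⟩ := mem_Sq.mp hc'
          rcases sq_or_neg_sq hmod y with hySq | hySq
          · refine ⟨v3 (-(y*y)) 0 1, v3_ne_zero_of 2 (by simp), ?_, cf y, pe2,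
              cf_mem_K hySq, pe2_mem_K, cf_ne_pe2, by simp [dot, cf], by simp [dot, pe2]⟩
            simp only [dot, v3_0, v3_1, v3_2, hy, hc'def]
            field_simp
            ring
          · refine ⟨v3 (-(y*y)) 0 1, v3_ne_zero_of 2 (by simp), ?_, cf (-y), pe2,
              cf_mem_K hySq, pe2_mem_K, cf_ne_pe2, by simp [dot, cf], by simp [dot, pe2]⟩
            simp only [dot, v3_0, v3_1, v3_2, hy, hc'def]
            field_simp
            ring
        · set t : ZMod p := c' * b'⁻¹ with htdef
          have htSq : t ∈ (Sq : Finset (ZMod p)) := nonsq_mul hmod hc' (inv_not_Sq hmod hb')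
          have ht0 : t ≠ 0 := by
            rw [htdef]
            exact mul_ne_zero (nonsq_ne_zero hc') (inv_ne_zero (nonsq_ne_zero hb'))
          have hteq : t = u 2 * (u 1)⁻¹ := by
            rw [htdef, hb'def, hc'def]
            field_simp
          refine ⟨v3 0 (-(t*t)) t, v3_ne_zero_of 2 (by simpa using ht0), ?_, cf 0, cf t,
            cf_mem_K zero_mem_Sq, cf_mem_K htSq, fun h => ht0 (cf_inj h).symm,
            by simp [dot, cf], by simp [dot, cf]; ring⟩
          simp only [dot, v3_0, v3_1, v3_2, hteq]
          field_simp
          ring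

lemma card_K (hmod : p % 4 = 3) : (K : Finset (Fin 3 → ZMod p)).card = (p+5)/2 := by
  have hdisj : Disjoint ((Sq : Finset (ZMod p)).image cf) ({pe2, pe3} : Finset (Fin 3 → ZMod p)) := by
    rw [Finset.disjoint_left]
    intro x hx hx2
    obtain ⟨t, _, rfl⟩ := Finset.mem_image.mp hx
    rcases Finset.mem_insert.mp hx2 with h | h
    · exact cf_ne_pe2 h
    · exact cf_ne_pe3 (Finset.mem_singleton.mp h)
  rw [K, Finset.card_union_of_disjoint hdisj,
    Finset.card_image_of_injective _ (fun a b h => cf_inj h), card_Sq hmod]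
  rw [Finset.card_insert_of_notMem (by simpa using pe2_ne_pe3), Finset.card_singleton]
  omega

variable (hmod : p % 4 = 3)

noncomputable def vtx (hmod : p % 4 = 3) :
    Fin ((p+5)/2) ≃ {x // x ∈ (K : Finset (Fin 3 → ZMod p))} :=
  (finCongr (card_K hmod).symm).trans (K : Finset (Fin 3 → ZMod p)).equivFin.symm

noncomputable def vF (hmod : p % 4 = 3) : Fin ((p+5)/2) → (Fin 3 → ZMod p) :=
  fun i => (vtx hmod i : Fin 3 → ZMod p)

lemma vF_mem (i : Fin ((p+5)/2)) : vF hmod i ∈ (K : Finset (Fin 3 → ZMod p)) :=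
  (vtx hmod i).2

lemma vF_inj : Function.Injective (vF hmod) := fun i j h =>
  (vtx hmod).injective (Subtype.ext h)

lemma vF_surj {a : Fin 3 → ZMod p} (ha : a ∈ (K : Finset (Fin 3 → ZMod p))) :
    ∃ i, vF hmod i = a :=
  ⟨(vtx hmod).symm ⟨a, ha⟩, by simp [vF]⟩

def eF : ZMod p → Fin p := fun a => ⟨a.val, ZMod.val_lt a⟩

lemma eF_inj : Function.Injective (eF : ZMod p → Fin p) := by
  intro a b h
  exact ZMod.val_injective p (congrArg Fin.val h)

noncomputable def phi (hmod : p % 4 = 3) : (Fin 3 → ZMod p) → (Fin ((p+5)/2) → Fin p) :=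
  fun x i => eF (dot x (vF hmod i))

lemma dot_sub (x y w : Fin 3 → ZMod p) : dot (x - y) w = dot x w - dot y w := by
  simp only [dot, Pi.sub_apply]; ring

lemma phi_inj : Function.Injective (phi hmod) := by
  intro x y h
  have hd : ∀ i, dot x (vF hmod i) = dot y (vF hmod i) := fun i => eF_inj (congrFun h i)
  have hz : ∀ a ∈ (K : Finset (Fin 3 → ZMod p)), dot (x - y) a = 0 := by
    intro a ha
    obtain ⟨i, rfl⟩ := vF_surj hmod ha
    rw [dot_sub, hd i, sub_self]
  have h0 := hz (cf 0) (cf_mem_K zero_mem_Sq)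
  have h2 := hz pe2 pe2_mem_K
  have h3 := hz pe3 pe3_mem_K
  have : x - y = 0 := by
    apply vec_eq_zero
    · simpa [dot, cf] using h0
    · simpa [dot, pe2] using h2
    · simpa [dot, pe3] using h3
  exact sub_eq_zero.mp this

noncomputable def Code (hmod : p % 4 = 3) : Finset (Fin ((p+5)/2) → Fin p) :=
  (univ : Finset (Fin 3 → ZMod p)).image (phi hmod)

lemma card_Code : (Code hmod).card = p ^ 3 := by
  rw [Code, Finset.card_image_of_injective _ (phi_inj hmod), Finset.card_univ,
    Fintype.card_fun, ZMod.card, Fintype.card_fin]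

lemma agree_lt_Code : ∀ w ∈ Code hmod, ∀ v ∈ Code hmod, w ≠ v →
    (Finset.univ.filter fun i => w i = v i).card < 3 := by
  intro w hw v hv hne
  obtain ⟨x, _, rfl⟩ := Finset.mem_image.mp hw
  obtain ⟨y, _, rfl⟩ := Finset.mem_image.mp hv
  by_contra hcon
  push_neg at hcon
  obtain ⟨T, hTsub, hT3⟩ := Finset.exists_subset_card_eq hcon
  obtain ⟨i, j, k, hij, hik, hjk, rfl⟩ := Finset.card_eq_three.mp hT3
  have hag : ∀ l ∈ ({i, j, k} : Finset (Fin ((p+5)/2))), dot (x - y) (vF hmod l) = 0 := by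
    intro l hl
    have := Finset.mem_filter.mp (hTsub hl)
    have heq : dot x (vF hmod l) = dot y (vF hmod l) := eF_inj this.2
    rw [dot_sub, heq, sub_self]
  have hreg : Reg (vF hmod i) (vF hmod j) (vF hmod k) :=
    reg_K hmod (vF_mem hmod i) (vF_mem hmod j) (vF_mem hmod k)
      (fun h => hij (vF_inj hmod h)) (fun h => hik (vF_inj hmod h))
      (fun h => hjk (vF_inj hmod h))
  have hxy : x - y = 0 := hreg _ (hag i (by simp)) (hag j (by simp)) (hag k (by simp))
  exact hne (congrArg (phi hmod) (sub_eq_zero.mp hxy))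

def Sec (z : Fin 3 → ZMod p) : Prop :=
  z ≠ 0 ∧ ∃ a b, a ∈ (K : Finset (Fin 3 → ZMod p)) ∧ b ∈ (K : Finset (Fin 3 → ZMod p)) ∧
    a ≠ b ∧ dot z a = 0 ∧ dot z b = 0

lemma dot_smul (c : ZMod p) (z w : Fin 3 → ZMod p) : dot (c • z) w = c * dot z w := by
  simp only [dot, Pi.smul_apply, smul_eq_mul]; ring

lemma dot_add (u x y : Fin 3 → ZMod p) : dot u (x + y) = dot u x + dot u y := by
  simp only [dot, Pi.add_apply]; ring

lemma dot_add_smul (u x z : Fin 3 → ZMod p) (c : ZMod p) :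
    dot u (x + c • z) = dot u x + c * dot u z := by
  simp only [dot, Pi.add_apply, Pi.smul_apply, smul_eq_mul]; ring

lemma smul_ne_zero' {c : ZMod p} (hc : c ≠ 0) {z : Fin 3 → ZMod p} (hz : z ≠ 0) :
    c • z ≠ 0 := by
  intro h
  apply hz
  have := congrArg (fun w => c⁻¹ • w) h
  simpa [smul_smul, inv_mul_cancel₀ hc] using this

lemma Sec.smul {z : Fin 3 → ZMod p} (hz : Sec z) {c : ZMod p} (hc : c ≠ 0) : Sec (c • z) := by
  obtain ⟨hz0, a, b, ha, hb, hab, hza, hzb⟩ := hz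
  exact ⟨smul_ne_zero' hc hz0, a, b, ha, hb, hab,
    by rw [dot_smul, hza, mul_zero], by rw [dot_smul, hzb, mul_zero]⟩

lemma sec_e1 : Sec (v3 1 0 0 : Fin 3 → ZMod p) := by
  refine ⟨fun h => ?_, pe2, pe3, pe2_mem_K, pe3_mem_K, pe2_ne_pe3,
    by simp [dot, pe2], by simp [dot, pe3]⟩
  have := congrFun h 0
  simp at this

lemma exists_dot_eq {u : Fin 3 → ZMod p} (hu : u ≠ 0) (d : ZMod p) :
    ∃ x, dot u x = d := by
  by_cases h0 : u 0 ≠ 0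
  · exact ⟨v3 (d * (u 0)⁻¹) 0 0, by simp [dot]; field_simp⟩
  · by_cases h1 : u 1 ≠ 0
    · exact ⟨v3 0 (d * (u 1)⁻¹) 0, by simp [dot]; field_simp⟩
    · have h2 : u 2 ≠ 0 := by
        intro h2
        push_neg at h0 h1
        exact hu (vec_eq_zero h0 h1 h2)
      exact ⟨v3 0 0 (d * (u 2)⁻¹), by simp [dot]; field_simp⟩

lemma card_dot_fiber {u : Fin 3 → ZMod p} (hu : u ≠ 0) (d : ZMod p) :
    ((univ : Finset (Fin 3 → ZMod p)).filter fun x => dot u x = d).card = p^2 := by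
  have hconst : ∀ d' : ZMod p,
      ((univ : Finset (Fin 3 → ZMod p)).filter fun x => dot u x = d').card
        = ((univ : Finset (Fin 3 → ZMod p)).filter fun x => dot u x = 0).card := by
    intro d'
    obtain ⟨x0, hx0⟩ := exists_dot_eq hu d'
    apply Finset.card_bij (fun x _ => x - x0)
    · intro x hx
      simp only [mem_filter, mem_univ, true_and] at hx ⊢
      have : dot u (x - x0) = dot u x - dot u x0 := by
        simp only [dot, Pi.sub_apply]; ring
      rw [this, hx, hx0, sub_self]
    · intro x hx y hy hxy
      have := congrArg (fun w => w + x0) hxy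
      simpa using this
    · intro y hy
      simp only [mem_filter, mem_univ, true_and] at hy ⊢
      exact ⟨y + x0, by rw [dot_add, hy, hx0, zero_add], by simp⟩
  have hsum : (univ : Finset (Fin 3 → ZMod p)).card
      = ∑ d' : ZMod p, ((univ : Finset (Fin 3 → ZMod p)).filter fun x => dot u x = d').card :=
    Finset.card_eq_sum_card_fiberwise (fun x _ => mem_univ _)
  rw [Finset.sum_congr rfl (fun d' _ => hconst d')] at hsum
  rw [Finset.sum_const, smul_eq_mul] at hsum
  simp only [Finset.card_univ] at hsum
  have hX : Fintype.card (Fin 3 → ZMod p) = p^3 := by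
    rw [Fintype.card_fun, ZMod.card, Fintype.card_fin]
  rw [ZMod.card, hX] at hsum
  rw [hconst d]
  have hp0 : 0 < p := (Fact.out : p.Prime).pos
  have : p * ((univ : Finset (Fin 3 → ZMod p)).filter fun x => dot u x = 0).card = p * p^2 := by
    rw [← hsum]; ring
  exact Nat.eq_of_mul_eq_mul_left hp0 this

def line (x z : Fin 3 → ZMod p) : Finset (Fin 3 → ZMod p) :=
  (univ : Finset (ZMod p)).image (fun c => x + c • z)

lemma card_line {z : Fin 3 → ZMod p} (hz : z ≠ 0) (x : Fin 3 → ZMod p) :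
    (line x z).card = p := by
  rw [line, Finset.card_image_of_injective, Finset.card_univ, ZMod.card]
  intro c d h
  have h2 : (c - d) • z = 0 := by
    have := sub_eq_zero.mpr h
    simpa [sub_smul, add_sub_add_left_eq_sub] using this
  by_contra hcd
  exact smul_ne_zero' (sub_ne_zero.mpr hcd) hz h2

lemma line_count {B M : Finset (Fin 3 → ZMod p)} {z : Fin 3 → ZMod p} (hz : Sec z)
    (hind : ∀ x ∈ B, ∀ y ∈ B, x ≠ y → ¬ Sec (x - y))
    (hsub : ∀ x ∈ B, line x z ⊆ M) : B.card * p ≤ M.card := by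
  have hdisj : ∀ x ∈ B, ∀ y ∈ B, x ≠ y → Disjoint (line x z) (line y z) := by
    intro x hx y hy hxy
    rw [Finset.disjoint_left]
    intro w hw hw'
    obtain ⟨c, _, rfl⟩ := Finset.mem_image.mp hw
    obtain ⟨d, _, he⟩ := Finset.mem_image.mp hw'
    apply hind x hx y hy hxy
    have hxyz : x - y = (d - c) • z := by
      have h' : x - y = (y + d • z) - (y + c • z) := by rw [he]; abel
      rw [sub_smul, h']; abel
    rw [hxyz]
    apply hz.smul
    intro hdc
    rw [hdc, zero_smul] at hxyz
    exact hxy (sub_eq_zero.mp hxyz)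
  calc B.card * p = ∑ x ∈ B, (line x z).card := by
        rw [Finset.sum_congr rfl (fun x _ => card_line hz.1 x), Finset.sum_const, smul_eq_mul]
    _ = (B.biUnion (fun x => line x z)).card := (Finset.card_biUnion hdisj).symm
    _ ≤ M.card := Finset.card_le_card (fun w hw => by
        obtain ⟨x, hx, hxw⟩ := Finset.mem_biUnion.mp hw
        exact hsub x hx hxw)

lemma dot_sub' (u x y : Fin 3 → ZMod p) : dot (y - x) u = dot u y - dot u x := by
  simp only [dot, Pi.sub_apply]; ring

lemma no_coloring (hmod : p % 4 = 3) (f : (Fin 3 → ZMod p) → Fin p)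
    (hf : ∀ x y, x ≠ y → Sec (x - y) → f x ≠ f y) : False := by
  have hp0 : 0 < p := (Fact.out : p.Prime).pos
  have hp3 : 3 ≤ p := by omega
  have hX : (univ : Finset (Fin 3 → ZMod p)).card = p^3 := by
    rw [Finset.card_univ, Fintype.card_fun, ZMod.card, Fintype.card_fin]
  set A : Fin p → Finset (Fin 3 → ZMod p) :=
    fun t => univ.filter (fun x => f x = t) with hA
  have hind : ∀ t, ∀ x ∈ A t, ∀ y ∈ A t, x ≠ y → ¬ Sec (x - y) := by
    intro t x hx y hy hxy hsec
    apply hf x y hxy hsec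
    rw [(Finset.mem_filter.mp hx).2, (Finset.mem_filter.mp hy).2]
  have hle : ∀ t, (A t).card ≤ p^2 := by
    intro t
    have := line_count sec_e1 (hind t) (fun x _ => Finset.subset_univ _)
    rw [hX] at this
    have h3 : p^3 = p^2 * p := by ring
    rw [h3] at this
    exact Nat.le_of_mul_le_mul_right this hp0
  have hsum : ∑ t : Fin p, (A t).card = p^3 := by
    rw [← hX]
    exact (Finset.card_eq_sum_card_fiberwise (fun x _ => mem_univ (f x))).symm
  have heq : ∀ t, (A t).card = p^2 := by
    by_contra hcon
    push_neg at hcon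
    obtain ⟨t0, ht0⟩ := hcon
    have hlt : (A t0).card < p^2 := lt_of_le_of_ne (hle t0) ht0
    have : ∑ t : Fin p, (A t).card < ∑ t : Fin p, p^2 := by
      apply Finset.sum_lt_sum (fun t _ => hle t) ⟨t0, mem_univ t0, hlt⟩
    rw [hsum, Finset.sum_const, Finset.card_univ, Fintype.card_fin, smul_eq_mul] at this
    have : p^3 < p^3 := by
      calc p^3 < p * p^2 := this
        _ = p^3 := by ring
    exact lt_irrefl _ this
  -- fix a class
  set t0 : Fin p := ⟨0, hp0⟩ with ht0def
  set B : Finset (Fin 3 → ZMod p) := A t0 with hBdef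
  have hBcard : B.card = p^2 := heq t0
  have hBind : ∀ x ∈ B, ∀ y ∈ B, x ≠ y → ¬ Sec (x - y) := hind t0
  -- fiber bound
  have hfiber : ∀ u : Fin 3 → ZMod p, u ≠ 0 → ∀ d : ZMod p,
      (B.filter fun x => dot u x = d).card ≤ p := by
    intro u hu d
    obtain ⟨z, hz0, hzu, a, b, ha, hb, hab, hza, hzb⟩ := secant_through hmod hu
    have hsec : Sec z := ⟨hz0, a, b, ha, hb, hab, hza, hzb⟩
    have hsub : ∀ x ∈ B.filter (fun x => dot u x = d),
        line x z ⊆ univ.filter (fun x => dot u x = d) := by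
      intro x hx w hw
      obtain ⟨c, _, rfl⟩ := Finset.mem_image.mp hw
      rw [Finset.mem_filter]
      refine ⟨mem_univ _, ?_⟩
      rw [dot_add_smul, dot_comm u z, hzu, mul_zero, add_zero]
      exact (Finset.mem_filter.mp hx).2
    have hind' : ∀ x ∈ B.filter (fun x => dot u x = d), ∀ y ∈ B.filter (fun x => dot u x = d),
        x ≠ y → ¬ Sec (x - y) := by
      intro x hx y hy hxy
      exact hBind x (Finset.mem_filter.mp hx).1 y (Finset.mem_filter.mp hy).1 hxy
    have := line_count hsec hind' hsub
    rw [card_dot_fiber hu d] at this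
    have h2 : p^2 = p * p := by ring
    rw [h2] at this
    exact Nat.le_of_mul_le_mul_right this hp0
  -- double count
  set U : Finset (Fin 3 → ZMod p) := univ.filter (fun u => u ≠ 0) with hUdef
  have hUcard : U.card = p^3 - 1 := by
    rw [hUdef, Finset.filter_ne', Finset.card_erase_of_mem (mem_univ 0), hX]
  set S : ℕ := ∑ u ∈ U, ∑ x ∈ B, ((B.erase x).filter fun y => dot u y = dot u x).card with hSdef
  -- upper bound
  have hupper : S ≤ (p^3 - 1) * (p^2 * (p - 1)) := by
    rw [hSdef]
    calc ∑ u ∈ U, ∑ x ∈ B, ((B.erase x).filter fun y => dot u y = dot u x).card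
        ≤ ∑ u ∈ U, ∑ x ∈ B, (p - 1) := by
          apply Finset.sum_le_sum
          intro u hu
          apply Finset.sum_le_sum
          intro x hx
          have hsubset : (B.erase x).filter (fun y => dot u y = dot u x)
              ⊆ (B.filter (fun y => dot u y = dot u x)).erase x := by
            intro y hy
            rw [Finset.mem_erase, Finset.mem_filter]
            rw [Finset.mem_filter, Finset.mem_erase] at hy
            exact ⟨hy.1.1, hy.1.2, hy.2⟩
          have hxmem : x ∈ B.filter (fun y => dot u y = dot u x) :=
            Finset.mem_filter.mpr ⟨hx, rfl⟩
          calc ((B.erase x).filter fun y => dot u y = dot u x).card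
              ≤ ((B.filter (fun y => dot u y = dot u x)).erase x).card :=
                Finset.card_le_card hsubset
            _ = (B.filter (fun y => dot u y = dot u x)).card - 1 :=
                Finset.card_erase_of_mem hxmem
            _ ≤ p - 1 := by
                have := hfiber u (Finset.mem_filter.mp hu).2 (dot u x)
                omega
      _ = (p^3 - 1) * (p^2 * (p - 1)) := by
          rw [Finset.sum_const, smul_eq_mul, Finset.sum_const, smul_eq_mul, hBcard, hUcard]
  -- exact value
  have hswap : S = ∑ x ∈ B, ∑ y ∈ B.erase x, (U.filter fun u => dot u y = dot u x).card := by
    rw [hSdef]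
    simp_rw [Finset.card_filter]
    rw [Finset.sum_comm]
    exact Finset.sum_congr rfl fun x _ => Finset.sum_comm
  have hinner : ∀ x ∈ B, ∀ y ∈ B.erase x,
      (U.filter fun u => dot u y = dot u x).card = p^2 - 1 := by
    intro x hx y hy
    have hyx : y - x ≠ 0 := sub_ne_zero.mpr (Finset.mem_erase.mp hy).1
    have hset : U.filter (fun u => dot u y = dot u x)
        = (univ.filter fun u => dot (y - x) u = 0).erase 0 := by
      ext u
      rw [Finset.mem_filter, hUdef, Finset.mem_filter, Finset.mem_erase, Finset.mem_filter]
      constructor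
      · rintro ⟨⟨_, hu0⟩, heq⟩
        exact ⟨hu0, mem_univ _, by rw [dot_sub', heq, sub_self]⟩
      · rintro ⟨hu0, _, hd⟩
        rw [dot_sub'] at hd
        exact ⟨⟨mem_univ _, hu0⟩, sub_eq_zero.mp hd⟩
    rw [hset]
    have h0mem : (0 : Fin 3 → ZMod p) ∈ univ.filter (fun u => dot (y - x) u = 0) := by
      rw [Finset.mem_filter]
      exact ⟨mem_univ _, by simp [dot]⟩
    rw [Finset.card_erase_of_mem h0mem]
    have : (univ.filter fun u => dot (y - x) u = 0).card = p^2 := card_dot_fiber hyx 0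
    omega
  have hexact : S = p^2 * ((p^2 - 1) * (p^2 - 1)) := by
    rw [hswap]
    rw [Finset.sum_congr rfl (fun x hx => Finset.sum_congr rfl (fun y hy => hinner x hx y hy))]
    rw [Finset.sum_congr rfl (fun x hx => by
      rw [Finset.sum_const, smul_eq_mul, Finset.card_erase_of_mem hx, hBcard])]
    rw [Finset.sum_const, smul_eq_mul, hBcard]
  -- contradiction
  rw [hexact] at hupper
  have h2 : 1 ≤ p^2 := Nat.one_le_pow _ _ hp0
  have h3 : 1 ≤ p^3 := Nat.one_le_pow _ _ hp0
  have h1 : 1 ≤ p := hp0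
  zify [h1, h2, h3] at hupper
  have key : (p:ℤ)^2*(((p:ℤ)^2-1)*((p:ℤ)^2-1))
      = ((p:ℤ)^3-1)*((p:ℤ)^2*((p:ℤ)-1)) + (p:ℤ)^3*((p:ℤ)-1)^2 := by ring
  rw [key] at hupper
  have hppos : (3:ℤ) ≤ (p:ℤ) := by exact_mod_cast hp3
  nlinarith [hupper, hppos]

lemma main (hmod : p % 4 = 3) :
    ∃ C : Finset (Fin ((p + 5) / 2) → Fin p), IsMDS p 3 C ∧
      ¬ ∃ (C' : Finset (Fin ((p + 5) / 2 + 1) → Fin p)) (j : Fin ((p + 5) / 2 + 1)),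
          IsMDS p 3 C' ∧ C'.image (fun w => w ∘ j.succAbove) = C := by
  refine ⟨Code hmod, ⟨card_Code hmod, agree_lt_Code hmod⟩, ?_⟩
  rintro ⟨C', j, ⟨hcard', hagree'⟩, himg⟩
  have hex : ∀ x : Fin 3 → ZMod p, ∃ w, w ∈ C' ∧ w ∘ j.succAbove = phi hmod x := by
    intro x
    have hmem : phi hmod x ∈ Code hmod := Finset.mem_image_of_mem _ (mem_univ x)
    rw [← himg] at hmem
    exact Finset.mem_image.mp hmem
  choose W hWmem hWeq using hex
  apply no_coloring hmod (fun x => W x j)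
  intro x y hxy hsec hfeq
  obtain ⟨hz0, a, b, ha, hb, hab, hza, hzb⟩ := hsec
  obtain ⟨ia, hia⟩ := vF_surj hmod ha
  obtain ⟨ib, hib⟩ := vF_surj hmod hb
  have hiaib : ia ≠ ib := fun h => hab (by rw [← hia, ← hib, h])
  have hagree_a : phi hmod x ia = phi hmod y ia := by
    show eF (dot x (vF hmod ia)) = eF (dot y (vF hmod ia))
    congr 1
    have : dot x (vF hmod ia) - dot y (vF hmod ia) = 0 := by
      rw [← dot_sub, hia, hza]
    linear_combination this
  have hagree_b : phi hmod x ib = phi hmod y ib := by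
    show eF (dot x (vF hmod ib)) = eF (dot y (vF hmod ib))
    congr 1
    have : dot x (vF hmod ib) - dot y (vF hmod ib) = 0 := by
      rw [← dot_sub, hib, hzb]
    linear_combination this
  have hWne : W x ≠ W y := by
    intro h
    apply hxy
    apply phi_inj hmod
    rw [← hWeq x, ← hWeq y, h]
  have hsub : ({j, j.succAbove ia, j.succAbove ib} : Finset (Fin ((p+5)/2 + 1)))
      ⊆ univ.filter (fun i => W x i = W y i) := by
    intro l hl
    rw [Finset.mem_insert, Finset.mem_insert, Finset.mem_singleton] at hl
    rw [Finset.mem_filter]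
    refine ⟨mem_univ _, ?_⟩
    rcases hl with rfl | rfl | rfl
    · exact hfeq
    · have h1 := congrFun (hWeq x) ia
      have h2 := congrFun (hWeq y) ia
      simp only [Function.comp_apply] at h1 h2
      rw [h1, h2, hagree_a]
    · have h1 := congrFun (hWeq x) ib
      have h2 := congrFun (hWeq y) ib
      simp only [Function.comp_apply] at h1 h2
      rw [h1, h2, hagree_b]
  have hcard3 : ({j, j.succAbove ia, j.succAbove ib} : Finset (Fin ((p+5)/2 + 1))).card = 3 := by
    rw [Finset.card_insert_of_notMem, Finset.card_insert_of_notMem, Finset.card_singleton]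
    · rw [Finset.mem_singleton]
      exact fun h => hiaib (Fin.succAbove_right_injective h)
    · rw [Finset.mem_insert, Finset.mem_singleton]
      push_neg
      exact ⟨(Fin.succAbove_ne j ia).symm, (Fin.succAbove_ne j ib).symm⟩
  have hge : 3 ≤ (univ.filter fun i => W x i = W y i).card := by
    rw [← hcard3]
    exact Finset.card_le_card hsub
  have hlt := hagree' (W x) (hWmem x) (W y) (hWmem y) hWne
  omega

end MDSAux

/-- For every prime `p ≡ 3 (mod 4)` there is a maximal `((p+5)/2, 3, p)`-MDS code:
one admitting no extension (by any coordinate position) to a longer MDS code. -/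
theorem exists_maximal_mds (p : ℕ) (hp : p.Prime) (hmod : p % 4 = 3) :
    ∃ C : Finset (Fin ((p + 5) / 2) → Fin p), IsMDS p 3 C ∧
      ¬ ∃ (C' : Finset (Fin ((p + 5) / 2 + 1) → Fin p)) (j : Fin ((p + 5) / 2 + 1)),
          IsMDS p 3 C' ∧ C'.image (fun w => w ∘ j.succAbove) = C := by
  haveI : Fact p.Prime := ⟨hp⟩
  exact MDSAux.main hmod
end
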